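/- For any N ≥ 3, h > 0, an invertible matrix M ∈ ℝ^{n×n}, and arbitrary matrices A_{η,k}, A_{v,k} ∈ ℝ^{n×n} (k = 1,…,N−1), define A_k = [[A_{η,k}, h I_n],[0, I_n + h A_{v,k}]] ∈ ℝ^{2n×2n} and B_k = [[0],[h M]] ∈ ℝ^{2n×n}, and let G_k = A_{N−1}⋯A_{k+1} B_k (G_{N−1} = B_{N−1}). Then the stacked matrix 𝒢 = [G_1 ⋯ G_{N−1}] ∈ ℝ^{2n×(N−1)n} has rank 2n, and consequently 𝒢 R⁻¹ 𝒢ᵀ is positive definite for every symmetric positive definite R ∈ ℝ^{(N−1)n×(N−1)n}. -/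

import Mathlib

/-!
Only the last two sensitivities matter: `G_{N-1} = B` and `G_{N-2} = A_{N-1} B`, whose lower
blocks are `h M` and `h(I + h A_{v,N-1})M` and whose upper blocks are `0` and `h²M`. Side by side
they form a block lower-triangular `2n × 2n` matrix with invertible diagonal blocks, so these
`2n` columns of `𝒢` already span, i.e. the rows of `𝒢` are linearly independent. Then `𝒢ᵀ` is
injective, and `𝒢 R⁻¹ 𝒢ᵀ` is positive definite because `R⁻¹` is.
-/

namespace Matrix

theorem linearIndependent_row_of_submatrix {R m n n₀ : Type*} [CommRing R]
    {A : Matrix m n R} (c : n₀ → n) (h : LinearIndependent R (A.submatrix id c).row) :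
    LinearIndependent R A.row :=
  LinearIndependent.of_comp (LinearMap.funLeft R R c) h

theorem det_fromCols_fromBlocks_mul_fromRows_zero {R n : Type*} [CommRing R] [Fintype n]
    [DecidableEq n] (P Q S C : Matrix n n R) :
    -- without the ascription `*` elaborates to the `CStarMatrix` multiplication instance
    (fromCols (fromBlocks P Q 0 S * fromRows (0 : Matrix n n R) C) (fromRows 0 C)).det =
      (Q * C).det * C.det := by
  rw [fromBlocks_mul_fromRows, fromCols_fromRows_eq_fromBlocks]
  simp [det_fromBlocks_zero₁₂]

end Matrix

open Matrix

/-- Full-row-rank lemma for the MPSP terminal sensitivity matrix: for `N ≥ 3`,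
`h > 0`, invertible inertia `M`, the stacked matrix `𝒢 = [G_1 ⋯ G_{N−1}]`
has rank `2n`, hence `𝒢 R⁻¹ 𝒢ᵀ ≻ 0` for every `R ≻ 0`. -/
theorem stacked_sensitivity_full_row_rank {n N : ℕ} (hN : 3 ≤ N)
    (h : ℝ) (hh : 0 < h)
    (M : Matrix (Fin n) (Fin n) ℝ) (hM : IsUnit M.det)
    (Aη Av : ℕ → Matrix (Fin n) (Fin n) ℝ)
    (A : ℕ → Matrix (Fin n ⊕ Fin n) (Fin n ⊕ Fin n) ℝ)
    (hA : ∀ k, A k = Matrix.fromBlocks (Aη k) (h • (1 : Matrix (Fin n) (Fin n) ℝ))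
          0 (1 + h • Av k))
    (B : ℕ → Matrix (Fin n ⊕ Fin n) (Fin n) ℝ)
    (hB : ∀ k, B k = Matrix.fromRows 0 (h • M))
    (G : ℕ → Matrix (Fin n ⊕ Fin n) (Fin n) ℝ)
    (hG : ∀ k, G k = (((List.range' (k + 1) (N - 1 - k)).map A).reverse).prod * B k)
    (𝒢 : Matrix (Fin n ⊕ Fin n) (Fin (N - 1) × Fin n) ℝ)
    (h𝒢 : ∀ i kj, 𝒢 i kj = G ((kj.1 : ℕ) + 1) i kj.2) :
    𝒢.rank = 2 * n ∧
    ∀ R : Matrix (Fin (N - 1) × Fin n) (Fin (N - 1) × Fin n) ℝ, R.PosDef →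
      (𝒢 * R⁻¹ * 𝒢ᵀ).PosDef := by
  have hlast : G (N - 1) = B (N - 1) := by
    rw [hG, show N - 1 - (N - 1) = 0 by omega]
    simp
  have hpenult : G (N - 2) = A (N - 1) * B (N - 1) := by
    rw [hG, show N - 2 + 1 = N - 1 by omega, show N - 1 - (N - 2) = 1 by omega]
    simp [hB]
  let cols : Fin n ⊕ Fin n → Fin (N - 1) × Fin n :=
    Sum.elim (Prod.mk ⟨N - 3, by omega⟩) (Prod.mk ⟨N - 2, by omega⟩)
  have hcols : 𝒢.submatrix id cols = fromCols (G (N - 2)) (G (N - 1)) := by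
    ext i (j | j)
    · simp [cols, h𝒢, show N - 3 + 1 = N - 2 by omega]
    · simp [cols, h𝒢, show N - 2 + 1 = N - 1 by omega]
  have hunit : IsUnit (𝒢.submatrix id cols) := by
    rw [isUnit_iff_isUnit_det, hcols, hpenult, hlast, hA, hB,
      det_fromCols_fromBlocks_mul_fromRows_zero]
    simp [isUnit_iff_ne_zero, hh.ne', hM.ne_zero]
  have hrows : LinearIndependent ℝ 𝒢.row :=
    linearIndependent_row_of_submatrix cols (linearIndependent_rows_iff_isUnit.2 hunit)
  refine ⟨by simp [hrows.rank_matrix, two_mul], fun R hR => ?_⟩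
  simpa [conjTranspose_eq_transpose_of_trivial] using
    hR.inv.mul_mul_conjTranspose_same (vecMul_injective_iff.2 hrows)
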